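/- Let a_0 < a_1 < ⋯ < a_n be real numbers, let c_{a_0}, …, c_{a_n} > 0, l > 0, and weights ω_{a_0}, …, ω_{a_n} > 0, and let 𝒯_{a_i} be the rational GT-Bernstein basis functions. Then for every strictly increasing sequence a_0 < t_0 < t_1 < ⋯ < t_n < a_n, the collocation matrix C = [𝒯_{a_j}(t_i)]_{i,j=0}^{n} is strictly totally positive: every minor of C is strictly positive. -/

import Mathlib

/-!
The minor of the collocation matrix with rows `r` and columns `s` factors as a product of
positive row and column scalings times the generalized Vandermonde determinant
`det [x_i ^ e_j]`, where `x = (t - a₀) / (aₙ - t)` is increasing on `(a₀, aₙ)` and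
`e_j = l (a_j - a₀)` is increasing. Such a determinant never vanishes: by Rolle's theorem a
nonzero generalized polynomial `∑ c_j y ^ e_j` with `m` terms has fewer than `m` positive
zeros. Deforming the exponents linearly to `0, 1, …, k - 1` therefore keeps the determinant
away from `0`, and at the end of the deformation it is an ordinary Vandermonde determinant,
which is positive.
-/

open Finset Set

/-- A real matrix is strictly totally positive if every minor (determinant of the
submatrix obtained by selecting rows `r 0 < r 1 < ⋯` and columns `c 0 < c 1 < ⋯`)
is strictly positive. -/
def IsStrictlyTotallyPositive {N M : ℕ} (A : Matrix (Fin N) (Fin M) ℝ) : Prop :=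
  ∀ (k : ℕ) (r : Fin k → Fin N) (c : Fin k → Fin M),
    StrictMono r → StrictMono c → 0 < (A.submatrix r c).det

/-- The GT-Bernstein basis functions
`β_{a_i}(t) = c_{a_i} (l(t − a_0))^{l(a_i − a_0)} (l(a_n − t))^{l(a_n − a_i)}`,
where powers are real powers (`Real.rpow`, which satisfies `0 ^ 0 = 1`). -/
noncomputable def gtBernstein (n : ℕ) (a c : Fin (n + 1) → ℝ) (l : ℝ)
    (i : Fin (n + 1)) (t : ℝ) : ℝ :=
  c i * (l * (t - a 0)) ^ (l * (a i - a 0)) *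
    (l * (a (Fin.last n) - t)) ^ (l * (a (Fin.last n) - a i))

/-- The rational GT-Bernstein basis functions
`𝒯_{a_i}(t) = ω_{a_i} β_{a_i}(t) / Σ_j ω_{a_j} β_{a_j}(t)`. -/
noncomputable def ratGTBernstein (n : ℕ) (a c : Fin (n + 1) → ℝ) (l : ℝ)
    (ω : Fin (n + 1) → ℝ) (i : Fin (n + 1)) (t : ℝ) : ℝ :=
  ω i * gtBernstein n a c l i t / ∑ j, ω j * gtBernstein n a c l j t

theorem exists_strictMono_deriv_eq_zero {m : ℕ} {f f' : ℝ → ℝ} {U : Set ℝ} [U.OrdConnected]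
    (hf : ∀ y ∈ U, HasDerivAt f (f' y) y) {x : Fin (m + 1) → ℝ} (hx : StrictMono x)
    (hxU : ∀ i, x i ∈ U) (hfx : ∀ i, f (x i) = 0) :
    ∃ y : Fin m → ℝ, StrictMono y ∧ (∀ i, y i ∈ U) ∧ ∀ i, f' (y i) = 0 := by
  have hRolle : ∀ i : Fin m, ∃ y ∈ Ioo (x i.castSucc) (x i.succ), f' y = 0 := fun i =>
    have hIcc : Icc (x i.castSucc) (x i.succ) ⊆ U := Set.Icc_subset U (hxU _) (hxU _)
    exists_hasDerivAt_eq_zero (hx Fin.castSucc_lt_succ)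
      (fun y hy => (hf y (hIcc hy)).continuousAt.continuousWithinAt)
      ((hfx _).trans (hfx _).symm) fun y hy => hf y (hIcc (Ioo_subset_Icc_self hy))
  choose y hy hf'y using hRolle
  refine ⟨y, fun i j hij => ?_, fun i => ?_, hf'y⟩
  · calc y i < x i.succ := (hy i).2
      _ ≤ x j.castSucc := hx.monotone (Fin.succ_le_castSucc_iff.mpr hij)
      _ < y j := (hy j).1
  · exact Set.Icc_subset U (hxU _) (hxU _) (Ioo_subset_Icc_self (hy i))

theorem eq_zero_of_forall_sum_mul_rpow_eq_zero {m : ℕ} {e c x : Fin m → ℝ} (he : StrictMono e)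
    (hx : StrictMono x) (hx0 : ∀ i, 0 < x i) (h : ∀ i, ∑ j, c j * x i ^ e j = 0) : c = 0 := by
  induction m with
  | zero => exact Subsingleton.elim _ _
  | succ m ih =>
    -- Dividing by `y ^ e 0` kills the derivative of the first term.
    set g : ℝ → ℝ := fun y => ∑ j, c j * y ^ (e j - e 0)
    have hg : ∀ y ∈ Ioi (0 : ℝ), HasDerivAt g
        (∑ j : Fin m, c j.succ * (e j.succ - e 0) * y ^ (e j.succ - e 0 - 1)) y := by
      intro y hy
      refine (HasDerivAt.fun_sum fun j _ =>
        (Real.hasDerivAt_rpow_const (p := e j - e 0) (Or.inl (ne_of_gt hy))).const_mul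
          (c j)).congr_deriv ?_
      simp [Fin.sum_univ_succ, mul_assoc]
    have hgx : ∀ i, g (x i) = 0 := fun i => by
      simp only [g, Real.rpow_sub (hx0 i), mul_div_assoc', ← Finset.sum_div, h i, zero_div]
    obtain ⟨y, hy, hy0, hg'y⟩ := exists_strictMono_deriv_eq_zero hg hx hx0 hgx
    have htail : ∀ j : Fin m, c j.succ = 0 := fun j =>
      have he' : StrictMono fun j : Fin m => e j.succ - e 0 - 1 := fun i j hij => by
        simpa using he (Fin.succ_lt_succ_iff.mpr hij)
      (mul_eq_zero.mp (congrFun (ih he' hy hy0 hg'y) j)).resolve_right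
        (sub_ne_zero.mpr (he j.succ_pos).ne')
    have hhead : c 0 = 0 := by
      have h0 := h 0
      simp only [Fin.sum_univ_succ, htail, zero_mul, sum_const_zero, add_zero] at h0
      exact (mul_eq_zero.mp h0).resolve_right (Real.rpow_pos_of_pos (hx0 0) _).ne'
    funext j
    exact Fin.cases hhead htail j

theorem det_rpow_ne_zero {k : ℕ} {x e : Fin k → ℝ} (hx : StrictMono x) (hx0 : ∀ i, 0 < x i)
    (he : StrictMono e) : (Matrix.of fun i j => x i ^ e j).det ≠ 0 := by
  intro hdet
  obtain ⟨v, hv, hMv⟩ := Matrix.exists_mulVec_eq_zero_iff.mpr hdet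
  refine hv (eq_zero_of_forall_sum_mul_rpow_eq_zero he hx hx0 fun i => ?_)
  simpa [Matrix.mulVec, dotProduct, mul_comm] using congrFun hMv i

theorem det_vandermonde_pos {k : ℕ} {x : Fin k → ℝ} (hx : StrictMono x) :
    0 < (Matrix.vandermonde x).det := by
  rw [Matrix.det_vandermonde]
  exact prod_pos fun i _ => prod_pos fun j hj => sub_pos.mpr (hx (mem_Ioi.mp hj))

theorem det_rpow_pos {k : ℕ} {x e : Fin k → ℝ} (hx : StrictMono x) (hx0 : ∀ i, 0 < x i)
    (he : StrictMono e) : 0 < (Matrix.of fun i j => x i ^ e j).det := by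
  set D : ℝ → ℝ := fun θ => (Matrix.of fun i j => x i ^ ((1 - θ) * e j + θ * j)).det
  have hD : ∀ θ ∈ Icc (0 : ℝ) 1, D θ ≠ 0 := fun θ hθ => det_rpow_ne_zero hx hx0 fun j j' hjj' => by
    have hj : (j : ℝ) < j' := by exact_mod_cast hjj'
    rcases hθ.2.lt_or_eq with hθ1 | rfl
    · nlinarith [mul_pos (sub_pos.mpr hθ1) (sub_pos.mpr (he hjj')), hθ.1]
    · simpa using hj
  have hDcont : Continuous D :=
    Continuous.matrix_det <| continuous_pi fun i => continuous_pi fun j =>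
      continuous_const.rpow (by fun_prop) fun _ => Or.inl (hx0 i).ne'
  have hD1 : 0 < D 1 := by
    convert det_vandermonde_pos hx using 3
    ext i j
    simp [Matrix.vandermonde]
  have hD0 : D 0 = (Matrix.of fun i j => x i ^ e j).det := by simp [D]
  by_contra hneg
  obtain ⟨θ, hθ, hDθ⟩ := intermediate_value_Icc zero_le_one hDcont.continuousOn
    ⟨hD0 ▸ not_lt.mp hneg, hD1.le⟩
  exact hD θ hθ hDθ

section GTBernstein

variable {n : ℕ} {a c : Fin (n + 1) → ℝ} {l t : ℝ}

theorem gtBernstein_eq_mul_rpow (hl : 0 < l) (ht0 : a 0 < t) (htn : t < a (Fin.last n))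
    (i : Fin (n + 1)) :
    gtBernstein n a c l i t = c i * (l * (a (Fin.last n) - t)) ^ (l * (a (Fin.last n) - a 0)) *
      ((t - a 0) / (a (Fin.last n) - t)) ^ (l * (a i - a 0)) := by
  have hu : 0 < l * (t - a 0) := mul_pos hl (sub_pos.mpr ht0)
  have hv : 0 < l * (a (Fin.last n) - t) := mul_pos hl (sub_pos.mpr htn)
  rw [gtBernstein, ← mul_div_mul_left (t - a 0) _ hl.ne', Real.div_rpow hu.le hv.le,
    show l * (a (Fin.last n) - a i) = l * (a (Fin.last n) - a 0) - l * (a i - a 0) by ring,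
    Real.rpow_sub hv]
  field_simp

theorem gtBernstein_pos (hc : ∀ i, 0 < c i) (hl : 0 < l) (ht0 : a 0 < t)
    (htn : t < a (Fin.last n)) (i : Fin (n + 1)) : 0 < gtBernstein n a c l i t := by
  rw [gtBernstein_eq_mul_rpow hl ht0 htn]
  have hv : 0 < a (Fin.last n) - t := sub_pos.mpr htn
  have hu : 0 < t - a 0 := sub_pos.mpr ht0
  exact mul_pos (mul_pos (hc i) (Real.rpow_pos_of_pos (mul_pos hl hv) _))
    (Real.rpow_pos_of_pos (div_pos hu hv) _)

theorem ratGTBernstein_eq_mul_rpow (ω : Fin (n + 1) → ℝ) (hl : 0 < l) (ht0 : a 0 < t)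
    (htn : t < a (Fin.last n)) (i : Fin (n + 1)) :
    ratGTBernstein n a c l ω i t =
      (l * (a (Fin.last n) - t)) ^ (l * (a (Fin.last n) - a 0)) /
          (∑ j, ω j * gtBernstein n a c l j t) *
        (ω i * c i * ((t - a 0) / (a (Fin.last n) - t)) ^ (l * (a i - a 0))) := by
  rw [ratGTBernstein, gtBernstein_eq_mul_rpow hl ht0 htn]
  ring

end GTBernstein

theorem strictMonoOn_sub_div_sub {p q : ℝ} : StrictMonoOn (fun t => (t - p) / (q - t)) (Ioo p q) :=
  fun _ _ _ ht hst => div_lt_div₀ (sub_lt_sub_right hst p) (sub_le_sub_left hst.le q)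
    (sub_nonneg.mpr ht.1.le) (sub_pos.mpr ht.2)

theorem Matrix.det_of_mul_mul {ι R : Type*} [Fintype ι] [DecidableEq ι] [CommRing R]
    (P Q : ι → R) (V : ι → ι → R) :
    (Matrix.of fun i j => P i * (Q j * V i j)).det =
      (∏ i, P i) * ((∏ j, Q j) * (Matrix.of V).det) := by
  rw [← Matrix.det_mul_row Q (Matrix.of V)]
  exact Matrix.det_mul_column P _

/-- For strictly increasing nodes `a 0 < a 1 < ⋯ < a n`, coefficients
`c i > 0`, `l > 0`, weights `ω i > 0`, and any strictly increasing sequence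
`a 0 < t 0 < t 1 < ⋯ < t n < a n`, the collocation matrix `C = [𝒯_{a_j}(t_i)]` of
the rational GT-Bernstein basis is strictly totally positive. -/
theorem ratGTBernstein_collocation_STP
    (n : ℕ) (a c : Fin (n + 1) → ℝ) (l : ℝ) (ω : Fin (n + 1) → ℝ)
    (ha : StrictMono a) (hc : ∀ i, 0 < c i) (hl : 0 < l) (hω : ∀ i, 0 < ω i)
    (t : Fin (n + 1) → ℝ) (ht : StrictMono t)
    (ht0 : a 0 < t 0) (htn : t (Fin.last n) < a (Fin.last n)) :
    IsStrictlyTotallyPositive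
      (Matrix.of fun i j : Fin (n + 1) => ratGTBernstein n a c l ω j (t i)) := by
  intro k r s hr hs
  have hta : ∀ i, a 0 < t i := fun i => ht0.trans_le (ht.monotone (Fin.zero_le i))
  have htb : ∀ i, t i < a (Fin.last n) := fun i => (ht.monotone (Fin.le_last i)).trans_lt htn
  have hv : ∀ i, 0 < a (Fin.last n) - t i := fun i => sub_pos.mpr (htb i)
  simp only [Matrix.submatrix, Matrix.of_apply, ratGTBernstein_eq_mul_rpow ω hl (hta _) (htb _),
    Matrix.det_of_mul_mul]
  refine mul_pos (prod_pos fun i _ => div_pos (Real.rpow_pos_of_pos (mul_pos hl (hv _)) _)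
    (sum_pos (fun j _ => mul_pos (hω j) (gtBernstein_pos hc hl (hta _) (htb _) j)) univ_nonempty))
    (mul_pos (prod_pos fun j _ => mul_pos (hω _) (hc _)) (det_rpow_pos ?_ ?_ ?_))
  · exact fun i j hij => strictMonoOn_sub_div_sub ⟨hta _, htb _⟩ ⟨hta _, htb _⟩ (ht (hr hij))
  · exact fun i => div_pos (sub_pos.mpr (hta _)) (hv _)
  · exact fun i j hij => mul_lt_mul_of_pos_left (sub_lt_sub_right (ha (hs hij)) _) hl
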